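/- The Atiyah–Sutcliffe normalized determinant D_{U(n)} is invariant under permutations of the points: D_{U(n)}(x_{σ(1)},…,x_{σ(n)}) = D_{U(n)}(x₁,…,x_n) for every σ ∈ Σ_n. -/

import Mathlib

open Polynomial

open scoped Classical in
/-- Stereographic projection from the unit sphere in `ℝ³` to the Riemann sphere. -/
noncomputable def sproj (v : EuclideanSpace ℝ (Fin 3)) : OnePoint ℂ :=
  if v 2 = 1 then OnePoint.infty
  else (((v 0 : ℂ) + (v 1 : ℂ) * Complex.I) / (1 - (v 2 : ℂ)) : ℂ)

/-- The linear polynomial `p_z(t) = u t - v` associated to a Hopf lift `z = (u,v)`. -/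
noncomputable def lin (z : ℂ × ℂ) : Polynomial ℂ := C z.1 * X - C z.2

/-- The `2×2` determinant `det(w, w')` of two vectors of `ℂ²`. -/
def det2 (w w' : ℂ × ℂ) : ℂ := w.1 * w'.2 - w.2 * w'.1

/-- The point `t_{ab} = s((x_b - x_a)/‖x_b - x_a‖)` of the Riemann sphere. -/
noncomputable def tpt (x : Fin n → EuclideanSpace ℝ (Fin 3)) (a b : Fin n) : OnePoint ℂ :=
  sproj (‖x b - x a‖⁻¹ • (x b - x a))

/-- A canonical Hopf lift of a point of the Riemann sphere: `(1, ζ)` for finite `ζ`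
(a lift of the root of `t - ζ`), and `(0, 1)` for `ζ = ∞`. -/
noncomputable def liftOf : OnePoint ℂ → ℂ × ℂ
  | OnePoint.infty => (0, 1)
  | OnePoint.some ζ => (1, ζ)

/-- The Atiyah–Sutcliffe normalized determinant `D_{U(n)}(x) = det(M)/V`, computed with
canonical Hopf lifts (by lift-independence this is the normalized determinant). -/
noncomputable def ASD (n : ℕ) (x : Fin n → EuclideanSpace ℝ (Fin 3)) : ℂ :=
  (Matrix.of fun i a : Fin n =>
      (∏ b ∈ Finset.univ.erase a, lin (liftOf (tpt x a b))).coeff i).det /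
    ∏ p ∈ Finset.univ.filter (fun p : Fin n × Fin n => p.1 < p.2),
      det2 (liftOf (tpt x p.1 p.2)) (liftOf (tpt x p.2 p.1))

/-! Relabelling the points by `σ` permutes the columns of `M`, which multiplies `det M` by
`sign σ`, and permutes the pairs `a < b` indexing `V`; since `det(z_{ab}, z_{ba})` is antisymmetric
in `(a, b)`, the pairs whose order `σ` reverses contribute `sign σ` to `V` as well. -/

open Finset

theorem Finset.prod_filter_lt_eq_prod_prod_Ioi {α M : Type*} [Fintype α] [LinearOrder α]
    [LocallyFiniteOrderTop α] [CommMonoid M] (f : α → α → M) :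
    ∏ p ∈ univ.filter (fun p : α × α => p.1 < p.2), f p.1 p.2 = ∏ i, ∏ j ∈ Ioi i, f i j := by
  rw [prod_filter, Fintype.prod_prod_type]
  refine prod_congr rfl fun i _ => ?_
  rw [← prod_filter, filter_lt_eq_Ioi]

theorem Equiv.Perm.prod_filter_lt_comp_eq_sign_mul_prod {n : ℕ} {R : Type*} [CommRing R]
    (σ : Equiv.Perm (Fin n)) {f : Fin n → Fin n → R} (hf : ∀ i j, f i j = -f j i) :
    ∏ p ∈ univ.filter (fun p : Fin n × Fin n => p.1 < p.2), f (σ p.1) (σ p.2) =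
      σ.sign * ∏ p ∈ univ.filter (fun p : Fin n × Fin n => p.1 < p.2), f p.1 p.2 := by
  rw [prod_filter_lt_eq_prod_prod_Ioi (fun i j => f (σ i) (σ j)), prod_filter_lt_eq_prod_prod_Ioi,
    σ.prod_Ioi_comp_eq_sign_mul_prod hf]

theorem det2_swap (w w' : ℂ × ℂ) : det2 w w' = -det2 w' w := by
  simp only [det2]; ring

section

variable {n : ℕ}

namespace ASD

noncomputable def matrix (x : Fin n → EuclideanSpace ℝ (Fin 3)) : Matrix (Fin n) (Fin n) ℂ :=
  Matrix.of fun i a => (∏ b ∈ univ.erase a, lin (liftOf (tpt x a b))).coeff i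

noncomputable def vandermonde (x : Fin n → EuclideanSpace ℝ (Fin 3)) : ℂ :=
  ∏ p ∈ univ.filter (fun p : Fin n × Fin n => p.1 < p.2),
    det2 (liftOf (tpt x p.1 p.2)) (liftOf (tpt x p.2 p.1))

theorem eq_det_matrix_div_vandermonde (x : Fin n → EuclideanSpace ℝ (Fin 3)) :
    ASD n x = (matrix x).det / vandermonde x := rfl

theorem matrix_comp_perm (x : Fin n → EuclideanSpace ℝ (Fin 3)) (σ : Equiv.Perm (Fin n)) :
    matrix (x ∘ σ) = (matrix x).submatrix id σ := by
  ext i a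
  have hrange : univ.erase (σ a) = (univ.erase a).map σ.toEmbedding := by
    rw [map_erase, map_univ_equiv]; rfl
  simp only [matrix, Matrix.of_apply, Matrix.submatrix_apply, id, hrange, prod_map]
  rfl

theorem vandermonde_comp_perm (x : Fin n → EuclideanSpace ℝ (Fin 3)) (σ : Equiv.Perm (Fin n)) :
    vandermonde (x ∘ σ) = σ.sign * vandermonde x :=
  σ.prod_filter_lt_comp_eq_sign_mul_prod
    (f := fun a b => det2 (liftOf (tpt x a b)) (liftOf (tpt x b a))) fun _ _ => det2_swap _ _

end ASD

end

theorem stmt10_general (n : ℕ) (x : Fin n → EuclideanSpace ℝ (Fin 3))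
    (σ : Equiv.Perm (Fin n)) :
    ASD n (x ∘ σ) = ASD n x := by
  have hsign : ((σ.sign : ℤ) : ℂ) ≠ 0 := Int.cast_ne_zero.2 σ.sign.ne_zero
  rw [ASD.eq_det_matrix_div_vandermonde, ASD.eq_det_matrix_div_vandermonde,
    ASD.matrix_comp_perm, Matrix.det_permute', ASD.vandermonde_comp_perm,
    mul_div_mul_left _ _ hsign]

/-- The Atiyah–Sutcliffe normalized determinant is invariant under permutations of the
points: `D_{U(n)}(x_{σ(1)}, …, x_{σ(n)}) = D_{U(n)}(x₁, …, x_n)` for every `σ ∈ Σ_n`. -/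
theorem stmt10 (n : ℕ) (x : Fin n → EuclideanSpace ℝ (Fin 3))
    (hx : Function.Injective x) (σ : Equiv.Perm (Fin n)) :
    ASD n (x ∘ σ) = ASD n x :=
  stmt10_general n x σ
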